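/- arXiv:1308.4466 — 3 statements merged into one kernel-verified Lean document; each statement's English description precedes it below -/
import Mathlib

section
/- Let n ≥ 1, let (a_1 : b_1),…,(a_n : b_n) be pairwise distinct points of P¹(ℂ), and let (a : b) ∈ P¹(ℂ) be distinct from all of them. Then the polynomial F(x,y,z) = z·(b x − a y)^{n−1} − ∏_{i=1}^n (b_i x − a_i y) is homogeneous of degree n, satisfies F(a_i, b_i, 0) = 0 for every i = 1,…,n, and is irreducible in the polynomial ring ℂ[x,y,z]. -/
/-!
Homogeneity and the vanishing at the points `(aᵢ : bᵢ : 0)` are immediate. For irreducibility,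
view `F = z·G − H` with `G = ℓ^(n−1)` and `H = ∏ Lᵢ` in `ℂ[x,y]` as a polynomial of degree one
in `z` over `ℂ[x,y]`; it is irreducible as soon as `G ≠ 0` and `G`, `H` have no common
non-unit factor. Since `(a : b) ≠ (aᵢ : bᵢ)`, the linear forms `ℓ` and `Lᵢ` span `x` and `y`,
so a common factor of `ℓ` and `Lᵢ` divides both `x` and `y` and is a unit.
-/

open MvPolynomial

section LinearForms

variable {K σ : Type*} [Field K] {i j : σ}

theorem isRelPrime_X_X {R : Type*} [CommRing R] [IsDomain R] (hij : i ≠ j) :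
    IsRelPrime (X i : MvPolynomial σ R) (X j) :=
  X_prime.irreducible.isRelPrime_iff_not_dvd.mpr (by simpa using hij)

theorem isHomogeneous_C_mul_X_sub_C_mul_X (p q : K) :
    (C q * X i - C p * X j : MvPolynomial σ K).IsHomogeneous 1 :=
  (isHomogeneous_C_mul_X q i).sub (isHomogeneous_C_mul_X p j)

theorem isRelPrime_C_mul_X_sub_C_mul_X (hij : i ≠ j) {p q p' q' : K}
    (h : p * q' - p' * q ≠ 0) :
    IsRelPrime (C q * X i - C p * X j : MvPolynomial σ K) (C q' * X i - C p' * X j) := by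
  intro r hr hr'
  have hk : IsUnit (C (p' * q - p * q') : MvPolynomial σ K) :=
    (Ne.isUnit fun h0 => h (by linear_combination -h0)).map C
  refine isRelPrime_X_X hij (hk.dvd_mul_left.mp ?_) (hk.dvd_mul_left.mp ?_)
  · have hXi : C (p' * q - p * q') * X i =
        C p' * (C q * X i - C p * X j) - C p * (C q' * X i - C p' * X j) := by
      simp only [map_sub, map_mul]; ring
    rw [hXi]
    exact dvd_sub (hr.mul_left _) (hr'.mul_left _)
  · have hXj : C (p' * q - p * q') * X j =
        C q' * (C q * X i - C p * X j) - C q * (C q' * X i - C p' * X j) := by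
      simp only [map_sub, map_mul]; ring
    rw [hXj]
    exact dvd_sub (hr.mul_left _) (hr'.mul_left _)

end LinearForms

theorem isHomogeneous_X_mul_pow_sub_prod {R σ : Type*} [CommRing R] {n : ℕ} (hn : 1 ≤ n)
    (k : σ) {ℓ : MvPolynomial σ R} {L : Fin n → MvPolynomial σ R} (hℓ : ℓ.IsHomogeneous 1)
    (hL : ∀ i, (L i).IsHomogeneous 1) :
    (X k * ℓ ^ (n - 1) - ∏ i, L i).IsHomogeneous n := by
  refine .sub ?_ ?_
  · simpa [Nat.add_sub_cancel' hn] using (isHomogeneous_X R k).mul (hℓ.pow (n - 1))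
  · simpa using IsHomogeneous.prod Finset.univ L (fun _ => 1) fun i _ => hL i

theorem optionEquivLeft_rename_some {R σ : Type*} [CommRing R] (G : MvPolynomial σ R) :
    optionEquivLeft R σ (rename some G) = Polynomial.C G := by
  induction G using MvPolynomial.induction_on with
  | C r => simp [optionEquivLeft_C]
  | add p q hp hq => simp [hp, hq]
  | mul_X p k hp => simp [hp, optionEquivLeft_X_some]

theorem irreducible_X_none_mul_sub {R σ : Type*} [CommRing R] [IsDomain R]
    {G H : MvPolynomial σ R} (hG : G ≠ 0) (hGH : IsRelPrime G H) :
    Irreducible (X none * rename some G - rename some H : MvPolynomial (Option σ) R) := by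
  rw [← MulEquiv.irreducible_iff (optionEquivLeft R σ)]
  have hlin : optionEquivLeft R σ (X none * rename some G - rename some H) =
      Polynomial.C G * Polynomial.X + Polynomial.C (-H) := by
    rw [map_sub, map_mul, optionEquivLeft_X_none, optionEquivLeft_rename_some,
      optionEquivLeft_rename_some, Polynomial.C_neg, mul_comm, sub_eq_add_neg]
  rw [hlin]
  exact Polynomial.irreducible_C_mul_X_add_C hG hGH.neg_right

theorem stmt2_general (n : ℕ) (hn : 1 ≤ n) (a b : Fin n → ℂ) (c d : ℂ)
    (hsep : ∀ i, c * b i - a i * d ≠ 0)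
    (F : MvPolynomial (Fin 3) ℂ)
    (hF : F = X 2 * (C d * X 0 - C c * X 1) ^ (n - 1) -
      ∏ i, (C (b i) * X 0 - C (a i) * X 1)) :
    F.IsHomogeneous n ∧
    (∀ i, MvPolynomial.eval (![a i, b i, 0] : Fin 3 → ℂ) F = 0) ∧
    Irreducible F := by
  set ℓ : MvPolynomial (Fin 2) ℂ := C d * X 0 - C c * X 1
  set L : Fin n → MvPolynomial (Fin 2) ℂ := fun i => C (b i) * X 0 - C (a i) * X 1
  -- `ℓ` does not vanish at `(a₀, b₀)`
  have hℓ : ℓ ≠ 0 := fun h0 => hsep ⟨0, hn⟩ <| by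
    have h := congrArg (eval ![a ⟨0, hn⟩, b ⟨0, hn⟩]) h0
    simp only [ℓ, map_sub, map_mul, eval_C, eval_X, map_zero, Matrix.cons_val_zero,
      Matrix.cons_val_one] at h
    linear_combination -h
  have hcop : IsRelPrime (ℓ ^ (n - 1)) (∏ i, L i) :=
    .pow_left <| .prod_right fun i _ => isRelPrime_C_mul_X_sub_C_mul_X Fin.zero_ne_one (hsep i)
  have hFz : F = rename (finSuccEquiv' (Fin.last 2)).symm
      (X none * rename some (ℓ ^ (n - 1)) - rename some (∏ i, L i)) := by
    simp [hF, ℓ, L, show Fin.succAbove (2 : Fin 3) 1 = 1 from rfl]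
  refine ⟨?_, fun i => ?_, ?_⟩
  · rw [hF]
    exact isHomogeneous_X_mul_pow_sub_prod hn 2 (isHomogeneous_C_mul_X_sub_C_mul_X c d)
      fun i => isHomogeneous_C_mul_X_sub_C_mul_X (a i) (b i)
  · simp only [hF, map_sub, map_mul, map_prod]
    simp [Finset.prod_eq_zero (Finset.mem_univ i), mul_comm]
  · rw [hFz]
    exact (MulEquiv.irreducible_iff (renameEquiv ℂ _)).mpr
      (irreducible_X_none_mul_sub (pow_ne_zero _ hℓ) hcop)

theorem stmt2 (n : ℕ) (hn : 1 ≤ n) (a b : Fin n → ℂ) (c d : ℂ)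
    (hnz : ∀ i, ¬(a i = 0 ∧ b i = 0))
    (hcd : ¬(c = 0 ∧ d = 0))
    (hdist : ∀ i j, i ≠ j → a i * b j - a j * b i ≠ 0)
    (hsep : ∀ i, c * b i - a i * d ≠ 0)
    (F : MvPolynomial (Fin 3) ℂ)
    (hF : F = X 2 * (C d * X 0 - C c * X 1) ^ (n - 1) -
      ∏ i, (C (b i) * X 0 - C (a i) * X 1)) :
    F.IsHomogeneous n ∧
    (∀ i, MvPolynomial.eval (![a i, b i, 0] : Fin 3 → ℂ) F = 0) ∧
    Irreducible F :=
  stmt2_general n hn a b c d hsep F hF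
end

section
/- Let D = Σ_{i=1}^n (a_i : b_i : 0) be an n-degree Hausdorff divisor (n distinct points of P²(ℂ) on the line z = 0), and let H_0,…,H_k be a ℂ-basis of the space V(n,D) of homogeneous polynomials of degree n in ℂ[x,y,z] vanishing at all the points of D. Then the defining polynomial H = Σ_{j=0}^{k} λ_j H_j of the linear system H(n,D) is irreducible as an element of the polynomial ring ℂ[λ_0,…,λ_k, x, y, z]; in particular H has no nonconstant factor lying in ℂ[x,y,z] and no nonconstant factor lying in ℂ[λ_0,…,λ_k]. -/
/-!
The polynomial `H = ∑ λ_j B_j` has degree one in the `λ`'s, so in any factorization one factor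
has `λ`-degree zero: it lies in `ℂ[x,y,z]` and divides every `B_j`, hence every form of
`V(n,D)`. But `V(n,D)` contains `z ^ n` and `∏ (b_i x - a_i y)`, whose only common divisors are
units. A factor in `ℂ[λ]` is excluded by setting `x = y = z = 0`: this kills `H`, since the
`B_j` are forms of positive degree, but fixes every polynomial in the `λ`'s.
-/

open MvPolynomial

theorem isUnit_of_dvd_irreducible_of_leftInverse {R S F G : Type*}
    [CommMonoidWithZero R] [CommMonoidWithZero S]
    [FunLike F R S] [MonoidWithZeroHomClass F R S] [FunLike G S R] [MonoidWithZeroHomClass G S R]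
    {φ : F} {s : G} (hs : Function.LeftInverse φ s) {x : R} (hx : Irreducible x)
    (hφx : φ x = 0) {y : S} (hy : s y ∣ x) : IsUnit y := by
  obtain ⟨w, rfl⟩ := hy
  rcases hx.isUnit_or_isUnit rfl with h | h
  · simpa only [hs y] using h.map φ
  · rw [map_mul, hs y, (h.map φ).mul_left_eq_zero] at hφx
    rw [hφx, map_zero, zero_mul] at hx
    exact absurd hx not_irreducible_zero

theorem isUnit_of_dvd_prime_pow_of_dvd_of_not_dvd {M : Type*} [CommMonoidWithZero M]
    [IsCancelMulZero M] {p a g : M} (hp : Prime p) {n : ℕ} (hgp : g ∣ p ^ n) (hga : g ∣ a)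
    (hpa : ¬p ∣ a) : IsUnit g := by
  obtain ⟨m, -, hm⟩ := (dvd_prime_pow hp n).1 hgp
  rcases m with _ | m
  · simpa using hm
  · exact absurd ((dvd_pow_self p m.succ_ne_zero).trans (hm.symm.dvd.trans hga)) hpa

theorem forall_mem_dvd_of_forall_dvd_basis {ι K R : Type*} [Fintype ι] [CommSemiring K]
    [CommSemiring R] [Algebra K R] {V : Submodule K R} (B : Module.Basis ι K V) {g : R}
    (hg : ∀ j, g ∣ (B j : R)) : ∀ v ∈ V, g ∣ v := by
  intro v hv
  rw [← Subtype.coe_mk v hv, ← B.sum_repr ⟨v, hv⟩, Submodule.coe_sum]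
  refine Finset.dvd_sum fun j _ => ?_
  rw [Submodule.coe_smul, Algebra.smul_def]
  exact dvd_mul_of_dvd_right (hg j) _

namespace MvPolynomial

section LinearSystem

variable {ι σ R : Type*} [CommRing R]

theorem sumAlgEquiv_rename_inr (p : MvPolynomial σ R) :
    sumAlgEquiv R ι σ (rename Sum.inr p) = C p := by
  simpa using DFunLike.congr_fun (sumAlgEquiv_comp_rename_inr (R := R) (S₁ := ι) (S₂ := σ)) p

variable [Fintype ι]

noncomputable def linearSystemPolynomial (f : ι → MvPolynomial σ R) :
    MvPolynomial (ι ⊕ σ) R :=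
  ∑ j, X (Sum.inl j) * rename Sum.inr (f j)

theorem sumAlgEquiv_linearSystemPolynomial (f : ι → MvPolynomial σ R) :
    sumAlgEquiv R ι σ (linearSystemPolynomial f) =
      sumSMulX (Finsupp.equivFunOnFinite.symm f) := by
  simp [linearSystemPolynomial, sumSMulX, Finsupp.linearCombination_apply, Finsupp.sum_fintype,
    sumAlgEquiv_rename_inr, smul_eq_C_mul, mul_comm]

theorem rename_inr_dvd_linearSystemPolynomial_iff {f : ι → MvPolynomial σ R}
    {g : MvPolynomial σ R} :
    rename Sum.inr g ∣ linearSystemPolynomial f ↔ ∀ j, g ∣ f j := by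
  constructor
  · intro h j
    rw [← map_dvd_iff (sumAlgEquiv R ι σ), sumAlgEquiv_rename_inr,
      sumAlgEquiv_linearSystemPolynomial, C_dvd_iff_dvd_coeff] at h
    simpa [coeff_sumSMulX] using h (Finsupp.single j 1)
  · exact fun h => Finset.dvd_sum fun j _ => dvd_mul_of_dvd_right (map_dvd _ (h j)) _

theorem irreducible_linearSystemPolynomial [IsDomain R] {f : ι → MvPolynomial σ R}
    (hf : ∀ g, (∀ j, g ∣ f j) → IsUnit g) : Irreducible (linearSystemPolynomial f) := by
  rw [← MulEquiv.irreducible_iff (sumAlgEquiv R ι σ), sumAlgEquiv_linearSystemPolynomial]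
  refine irreducible_sumSMulX _ ?_ hf
  rw [Finsupp.support_nonempty_iff]
  intro hf0
  refine not_isUnit_zero (hf 0 fun j => ?_)
  rw [show f j = 0 by simpa using DFunLike.congr_fun hf0 j]

theorem aeval_linearSystemPolynomial_eq_zero {f : ι → MvPolynomial σ R}
    (hf : ∀ j, constantCoeff (f j) = 0) :
    aeval (Sum.elim X (0 : σ → MvPolynomial ι R)) (linearSystemPolynomial f) = 0 := by
  simp only [linearSystemPolynomial, map_sum, map_mul, aeval_X, aeval_rename, Sum.elim_comp_inr,
    aeval_zero, hf, map_zero, mul_zero, Finset.sum_const_zero]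

theorem isUnit_of_rename_inl_dvd_linearSystemPolynomial {f : ι → MvPolynomial σ R}
    (hirr : Irreducible (linearSystemPolynomial f)) (hf : ∀ j, constantCoeff (f j) = 0)
    {g : MvPolynomial ι R} (hg : rename Sum.inl g ∣ linearSystemPolynomial f) : IsUnit g :=
  isUnit_of_dvd_irreducible_of_leftInverse (φ := aeval (Sum.elim X (0 : σ → MvPolynomial ι R)))
    (fun p => by rw [aeval_rename, Sum.elim_comp_inl, aeval_X_left_apply]) hirr
    (aeval_linearSystemPolynomial_eq_zero hf) hg

end LinearSystem
end MvPolynomial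

namespace HausdorffDivisor

variable {K : Type*} [Field K] {n : ℕ} (a b : Fin n → K)

/-- Its zero locus is the union of the lines joining `(0 : 0 : 1)` to the points of `D`. -/
noncomputable def binaryForm : MvPolynomial (Fin 3) K :=
  ∏ i, (C (b i) * X 0 - C (a i) * X 1)

/-- The space `V(n,D)`. -/
noncomputable def vanishingForms : Submodule K (MvPolynomial (Fin 3) K) :=
  homogeneousSubmodule (Fin 3) K n ⊓ ⨅ i, LinearMap.ker (aeval ![a i, b i, 0]).toLinearMap

variable {a b}

theorem mem_vanishingForms_iff {p : MvPolynomial (Fin 3) K} :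
    p ∈ vanishingForms a b ↔ p.IsHomogeneous n ∧ ∀ i, aeval ![a i, b i, 0] p = 0 := by
  simp [vanishingForms, Submodule.mem_iInf, mem_homogeneousSubmodule]

theorem binaryForm_mem_vanishingForms : binaryForm a b ∈ vanishingForms a b := by
  refine mem_vanishingForms_iff.2 ⟨?_, fun i => ?_⟩
  · simpa [binaryForm] using IsHomogeneous.prod Finset.univ _ (fun _ => 1)
      fun i _ => (isHomogeneous_C_mul_X (b i) 0).sub (isHomogeneous_C_mul_X (a i) 1)
  · rw [binaryForm, map_prod]
    exact Finset.prod_eq_zero (Finset.mem_univ i) (by simp [mul_comm])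

theorem X_two_pow_mem_vanishingForms (hn : 0 < n) :
    (X 2 ^ n : MvPolynomial (Fin 3) K) ∈ vanishingForms a b :=
  mem_vanishingForms_iff.2 ⟨isHomogeneous_X_pow _ _, fun i => by simp [hn.ne']⟩

theorem binaryForm_ne_zero (hab : ∀ i, ¬(a i = 0 ∧ b i = 0)) : binaryForm a b ≠ 0 := by
  refine Finset.prod_ne_zero_iff.2 fun i _ h => hab i ⟨?_, ?_⟩
  · simpa using congrArg (aeval (![0, 1, 0] : Fin 3 → K)) h
  · simpa using congrArg (aeval (![1, 0, 0] : Fin 3 → K)) h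

theorem not_X_two_dvd_binaryForm (hab : ∀ i, ¬(a i = 0 ∧ b i = 0)) :
    ¬X 2 ∣ binaryForm a b := by
  rintro ⟨q, hq⟩
  let ρ : MvPolynomial (Fin 3) K →ₐ[K] MvPolynomial (Fin 3) K := aeval ![X 0, X 1, 0]
  have hρ : ρ (binaryForm a b) = binaryForm a b := by simp [ρ, binaryForm]
  refine binaryForm_ne_zero hab ?_
  rw [← hρ, hq, map_mul]
  simp [ρ]

theorem isUnit_of_forall_mem_vanishingForms_dvd (hn : 0 < n) (hab : ∀ i, ¬(a i = 0 ∧ b i = 0))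
    {g : MvPolynomial (Fin 3) K} (hg : ∀ v ∈ vanishingForms a b, g ∣ v) : IsUnit g :=
  isUnit_of_dvd_prime_pow_of_dvd_of_not_dvd X_prime (hg _ (X_two_pow_mem_vanishingForms hn))
    (hg _ binaryForm_mem_vanishingForms) (not_X_two_dvd_binaryForm hab)

theorem constantCoeff_eq_zero_of_mem_vanishingForms (hn : 0 < n) {p : MvPolynomial (Fin 3) K}
    (hp : p ∈ vanishingForms a b) : constantCoeff p = 0 :=
  (mem_vanishingForms_iff.1 hp).1.coeff_eq_zero (by simpa using hn.ne)

end HausdorffDivisor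

open HausdorffDivisor

theorem stmt3_general (n k : ℕ) (hn : 0 < n) (a b : Fin n → ℂ)
    (hnz : ∀ i, ¬(a i = 0 ∧ b i = 0))
    (V : Submodule ℂ (MvPolynomial (Fin 3) ℂ))
    (hV : V = homogeneousSubmodule (Fin 3) ℂ n ⊓
      ⨅ i, LinearMap.ker
        (MvPolynomial.aeval (![a i, b i, 0] : Fin 3 → ℂ)).toLinearMap)
    (B : Module.Basis (Fin (k + 1)) ℂ ↥V)
    (H : MvPolynomial (Fin (k + 1) ⊕ Fin 3) ℂ)
    (hH : H = ∑ j, X (Sum.inl j) *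
      rename Sum.inr ((B j : MvPolynomial (Fin 3) ℂ))) :
    Irreducible H ∧
    (∀ G : MvPolynomial (Fin 3) ℂ, rename Sum.inr G ∣ H → ∃ c : ℂ, G = C c) ∧
    (∀ G : MvPolynomial (Fin (k + 1)) ℂ, rename Sum.inl G ∣ H → ∃ c : ℂ, G = C c) := by
  change V = vanishingForms a b at hV
  subst hV
  change H = linearSystemPolynomial fun j => (B j : MvPolynomial (Fin 3) ℂ) at hH
  subst hH
  have eq_C_of_isUnit {σ : Type} {G : MvPolynomial σ ℂ} (hG : IsUnit G) : ∃ c, G = C c :=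
    let ⟨c, _, hc⟩ := isUnit_iff_eq_C_of_isReduced.1 hG; ⟨c, hc⟩
  have hB : ∀ G, (∀ j, G ∣ (B j : MvPolynomial (Fin 3) ℂ)) → IsUnit G := fun G hG =>
    isUnit_of_forall_mem_vanishingForms_dvd hn hnz (forall_mem_dvd_of_forall_dvd_basis B hG)
  have hirr := irreducible_linearSystemPolynomial hB
  refine ⟨hirr, fun G hG => ?_, fun G hG => ?_⟩
  · exact eq_C_of_isUnit (hB G (rename_inr_dvd_linearSystemPolynomial_iff.1 hG))
  · exact eq_C_of_isUnit (isUnit_of_rename_inl_dvd_linearSystemPolynomial hirr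
      (fun j => constantCoeff_eq_zero_of_mem_vanishingForms hn (B j).2) hG)

theorem stmt3 (n k : ℕ) (hn : 0 < n) (a b : Fin n → ℂ)
    (hnz : ∀ i, ¬(a i = 0 ∧ b i = 0))
    (hdist : ∀ i j, i ≠ j → a i * b j - a j * b i ≠ 0)
    (V : Submodule ℂ (MvPolynomial (Fin 3) ℂ))
    (hV : V = homogeneousSubmodule (Fin 3) ℂ n ⊓
      ⨅ i, LinearMap.ker
        (MvPolynomial.aeval (![a i, b i, 0] : Fin 3 → ℂ)).toLinearMap)
    (B : Module.Basis (Fin (k + 1)) ℂ ↥V)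
    (H : MvPolynomial (Fin (k + 1) ⊕ Fin 3) ℂ)
    (hH : H = ∑ j, X (Sum.inl j) *
      rename Sum.inr ((B j : MvPolynomial (Fin 3) ℂ))) :
    Irreducible H ∧
    (∀ G : MvPolynomial (Fin 3) ℂ, rename Sum.inr G ∣ H → ∃ c : ℂ, G = C c) ∧
    (∀ G : MvPolynomial (Fin (k + 1)) ℂ, rename Sum.inl G ∣ H → ∃ c : ℂ, G = C c) :=
  stmt3_general n k hn a b hnz V hV B H hH
end

section
/- Let K be a field, let n ≥ 2, and let f ∈ K[x,y] be a polynomial of total degree n of the form f = f_{n−1} + f_n, where f_d denotes the homogeneous component of f of degree d and f_n ≠ 0 (i.e. the affine curve f = 0 has a point of multiplicity at least n−1 at the origin). Set g(t) = f_{n−1}(t, 1) and h(t) = f_n(t, 1) in K[t], and assume h ≠ 0. Then in the rational function field K(t) one has f(−t·g(t)/h(t), −g(t)/h(t)) = 0; that is, x(t) = −t·g(t)/h(t), y(t) = −g(t)/h(t) is a rational parametrization of the curve by lines through the origin. Moreover, if K is algebraically closed and f is irreducible in K[x,y], then f_{n−1} ≠ 0 and the rational function g(t)/h(t) is not constant,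 so the parametrization is nonconstant. -/
/-!
Put `λ = -g/h`. As `f_{n-1}` and `f_n` are forms, `f(λt, λ) = λ^{n-1} (g + λ h) = 0`.

A binary form is the homogenization of its dehomogenization, and homogenization is
multiplicative, while a form of positive degree vanishes at the origin and so is not a unit.
If `f_{n-1} = 0`, then `f = f_n` is a binary form of degree `n ≥ 2`; over an algebraically closed
field a root of `h` gives a linear factor of `f` (the factor `y` when `h` is constant).
If `g/h = c`, then `c ≠ 0` and `f = (c + y) · h'` with `h'` the homogenization of `h` in
degree `n - 1`.
-/

open MvPolynomial
open scoped Polynomial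

namespace MvPolynomial

variable {σ R : Type*} [CommSemiring R]

theorem IsHomogeneous.aeval_smul {A : Type*} [CommSemiring A] [Algebra R A]
    {F : MvPolynomial σ R} {d : ℕ} (hF : F.IsHomogeneous d) (c : A) (v : σ → A) :
    MvPolynomial.aeval (c • v) F = c ^ d * MvPolynomial.aeval v F := by
  rw [aeval_def, eval₂_eq, aeval_def, eval₂_eq, Finset.mul_sum]
  refine Finset.sum_congr rfl fun m hm => ?_
  have hdeg : m.degree = d := by
    rw [Finsupp.degree_eq_weight_one]; exact hF (mem_support_iff.mp hm)
  simp only [Pi.smul_apply, smul_eq_mul, mul_pow, Finset.prod_mul_distrib,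
    Finset.prod_pow_eq_pow_sum, ← Finsupp.degree_apply, hdeg]
  ring

theorem not_isUnit_of_eval_eq_zero [Nontrivial R] {F : MvPolynomial σ R} (v : σ → R)
    (hv : eval v F = 0) : ¬IsUnit F :=
  fun hu => not_isUnit_zero (hv ▸ hu.map (eval v))

theorem IsHomogeneous.not_isUnit [Nontrivial R] {F : MvPolynomial σ R} {d : ℕ}
    (hF : F.IsHomogeneous d) (hd : d ≠ 0) : ¬IsUnit F := by
  refine not_isUnit_of_eval_eq_zero 0 ?_
  rw [eval_zero, constantCoeff_eq]
  exact hF.coeff_eq_zero (by simpa using hd.symm)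

theorem IsHomogeneous.natDegree_aeval_X_one_le {F : MvPolynomial (Fin 2) R} {d : ℕ}
    (hF : F.IsHomogeneous d) :
    (MvPolynomial.aeval (![Polynomial.X, 1] : Fin 2 → Polynomial R) F).natDegree ≤ d := by
  rw [aeval_def, eval₂_eq']
  refine Polynomial.natDegree_sum_le_of_forall_le _ _ fun m hm => ?_
  have hdeg : m 0 + m 1 = d := by
    rw [← Fin.sum_univ_two, ← Finsupp.degree_eq_sum, Finsupp.degree_eq_weight_one]
    exact hF (mem_support_iff.mp hm)
  simp only [Fin.prod_univ_two, Matrix.cons_val_zero, Matrix.cons_val_one, one_pow, mul_one,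
    ← Polynomial.C_eq_algebraMap]
  exact (Polynomial.natDegree_C_mul_le _ _).trans
    ((Polynomial.natDegree_X_pow_le _).trans (by omega))

theorem IsHomogeneous.aeval_smul_add_eq_zero {L : Type*} [Field L] [Algebra R L]
    {F₁ F₂ : MvPolynomial σ R} {d : ℕ} (h₁ : F₁.IsHomogeneous d) (h₂ : F₂.IsHomogeneous (d + 1))
    (v : σ → L) (hv : MvPolynomial.aeval v F₂ ≠ 0) :
    MvPolynomial.aeval ((-MvPolynomial.aeval v F₁ / MvPolynomial.aeval v F₂) • v) (F₁ + F₂)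
      = 0 := by
  rw [map_add, h₁.aeval_smul, h₂.aeval_smul, pow_succ, mul_assoc, div_mul_cancel₀ _ hv]
  ring

end MvPolynomial

namespace Polynomial

theorem not_irreducible_homogenize_mul {R : Type*} [CommSemiring R] [Nontrivial R]
    {p q : R[X]} {d e : ℕ} (hp : p.natDegree ≤ d) (hq : q.natDegree ≤ e) (hd : d ≠ 0)
    (he : e ≠ 0) : ¬Irreducible ((p * q).homogenize (d + e)) := by
  rw [homogenize_mul p q hp hq]
  intro hirr
  rcases hirr.isUnit_or_isUnit rfl with hu | hu
  · exact (isHomogeneous_homogenize p).not_isUnit hd hu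
  · exact (isHomogeneous_homogenize q).not_isUnit he hu

theorem not_irreducible_homogenize_of_isAlgClosed {K : Type*} [Field K] [IsAlgClosed K]
    {p : K[X]} {n : ℕ} (hp : p.natDegree ≤ n) (hn : 2 ≤ n) : ¬Irreducible (p.homogenize n) := by
  obtain ⟨a, q, rfl, ha, hq⟩ :
      ∃ a q : K[X], p = a * q ∧ a.natDegree ≤ 1 ∧ q.natDegree ≤ n - 1 := by
    by_cases h0 : p.natDegree = 0
    · exact ⟨1, p, (one_mul p).symm, by simp, by omega⟩
    obtain ⟨α, hα⟩ := IsAlgClosed.exists_root p fun h => h0 (natDegree_eq_of_degree_eq_some h)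
    refine ⟨X - C α, p /ₘ (X - C α), ((mul_divByMonic_eq_iff_isRoot).mpr hα).symm,
      by simp, ?_⟩
    rw [natDegree_divByMonic _ (monic_X_sub_C α), natDegree_X_sub_C]
    omega
  have := not_irreducible_homogenize_mul ha hq one_ne_zero (by omega)
  rwa [show 1 + (n - 1) = n by omega] at this

theorem not_irreducible_homogenize_C_mul_add {R : Type*} [CommRing R] [Nontrivial R] (c : R)
    {p : R[X]} {d : ℕ} (hp : p.natDegree ≤ d) (hd : d ≠ 0) :
    ¬Irreducible ((C c * p).homogenize d + p.homogenize (d + 1)) := by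
  have hy : p.homogenize (d + 1) = MvPolynomial.X 1 * p.homogenize d := by
    have := homogenize_mul (1 : R[X]) p (m := 1) (by simp) hp
    rwa [one_mul, add_comm, homogenize_one, pow_one] at this
  rw [homogenize_C_mul, hy, ← add_mul]
  intro hirr
  rcases hirr.isUnit_or_isUnit rfl with hu | hu
  · exact MvPolynomial.not_isUnit_of_eval_eq_zero ![0, -c] (by simp) hu
  · exact (isHomogeneous_homogenize p).not_isUnit hd hu

end Polynomial

namespace MvPolynomial

theorem IsHomogeneous.not_irreducible_of_isAlgClosed {K : Type*} [Field K] [IsAlgClosed K]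
    {F : MvPolynomial (Fin 2) K} {n : ℕ} (hF : F.IsHomogeneous n) (hn : 2 ≤ n) :
    ¬Irreducible F := by
  rw [← Polynomial.homogenize_eq_of_isHomogeneous hF rfl]
  exact Polynomial.not_irreducible_homogenize_of_isAlgClosed hF.natDegree_aeval_X_one_le hn

theorem IsHomogeneous.not_irreducible_add_of_aeval_X_one_eq_C_mul {R : Type*} [CommRing R]
    [IsDomain R] {F₁ F₂ : MvPolynomial (Fin 2) R} {d : ℕ} (h₁ : F₁.IsHomogeneous d)
    (h₂ : F₂.IsHomogeneous (d + 1)) (hd : d ≠ 0) {c : R} (hc : c ≠ 0)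
    (h₁₂ : MvPolynomial.aeval (![Polynomial.X, 1] : Fin 2 → Polynomial R) F₁
      = Polynomial.C c * MvPolynomial.aeval ![Polynomial.X, 1] F₂) :
    ¬Irreducible (F₁ + F₂) := by
  have hdeg := h₁.natDegree_aeval_X_one_le
  rw [h₁₂, Polynomial.natDegree_C_mul hc] at hdeg
  obtain ⟨p, hp, rfl, rfl⟩ : ∃ p : R[X], p.natDegree ≤ d ∧
      (Polynomial.C c * p).homogenize d = F₁ ∧ p.homogenize (d + 1) = F₂ :=
    ⟨_, hdeg, Polynomial.homogenize_eq_of_isHomogeneous h₁ h₁₂,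
      Polynomial.homogenize_eq_of_isHomogeneous h₂ rfl⟩
  exact Polynomial.not_irreducible_homogenize_C_mul_add c hp hd

end MvPolynomial

theorem RatFunc.aeval_X_one {K : Type*} [Field K] (F : MvPolynomial (Fin 2) K) :
    MvPolynomial.aeval ![RatFunc.X, 1] F
      = algebraMap K[X] (RatFunc K) (MvPolynomial.aeval ![Polynomial.X, 1] F) := by
  change _ = IsScalarTower.toAlgHom K K[X] (RatFunc K) _
  rw [comp_aeval_apply]
  congr 1
  ext i
  fin_cases i <;> simp [RatFunc.algebraMap_X]

theorem stmt12_general (K : Type*) [Field K] (n : ℕ) (hn : 2 ≤ n)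
    (f : MvPolynomial (Fin 2) K)
    (hf : f = homogeneousComponent (n - 1) f + homogeneousComponent n f)
    (g h : Polynomial K)
    (hg : g = MvPolynomial.aeval
      (![Polynomial.X, 1] : Fin 2 → Polynomial K) (homogeneousComponent (n - 1) f))
    (hh : h = MvPolynomial.aeval
      (![Polynomial.X, 1] : Fin 2 → Polynomial K) (homogeneousComponent n f))
    (hh0 : h ≠ 0)
    (G H : RatFunc K)
    (hG : G = algebraMap (Polynomial K) (RatFunc K) g)
    (hH : H = algebraMap (Polynomial K) (RatFunc K) h) :
    MvPolynomial.aeval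
      (![-(RatFunc.X * G) / H, -G / H] : Fin 2 → RatFunc K) f = 0 ∧
    (IsAlgClosed K → Irreducible f →
      homogeneousComponent (n - 1) f ≠ 0 ∧ ¬∃ c : K, G / H = RatFunc.C c) := by
  obtain ⟨m, rfl⟩ : ∃ m, n = m + 1 := ⟨n - 1, by omega⟩
  simp only [Nat.add_sub_cancel] at hf hg ⊢
  have hF₁ := homogeneousComponent_isHomogeneous m f
  have hF₂ := homogeneousComponent_isHomogeneous (m + 1) f
  have hH0 : H ≠ 0 := hH ▸ RatFunc.algebraMap_ne_zero hh0
  constructor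
  · have hv : (![-(RatFunc.X * G) / H, -G / H] : Fin 2 → RatFunc K)
        = (-G / H) • ![RatFunc.X, 1] := by
      ext i; fin_cases i <;> simp; ring
    have := hF₁.aeval_smul_add_eq_zero hF₂ ![RatFunc.X, 1]
      (by rwa [RatFunc.aeval_X_one, ← hh, ← hH])
    rwa [RatFunc.aeval_X_one, RatFunc.aeval_X_one, ← hg, ← hh, ← hG, ← hH, ← hf, ← hv] at this
  intro _ hirr
  have hF₁0 : homogeneousComponent m f ≠ 0 := fun h0 =>
    hF₂.not_irreducible_of_isAlgClosed hn (by rwa [hf, h0, zero_add] at hirr)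
  refine ⟨hF₁0, fun ⟨c, hc⟩ => ?_⟩
  have hgc : g = Polynomial.C c * h := by
    apply IsFractionRing.injective K[X] (RatFunc K)
    rw [← hG, map_mul, RatFunc.algebraMap_C, ← hH, ← hc, div_mul_cancel₀ _ hH0]
  have hc0 : c ≠ 0 := by
    rintro rfl
    exact hF₁0 (by rw [← Polynomial.homogenize_eq_of_isHomogeneous hF₁ hg.symm, hgc]; simp)
  exact hF₁.not_irreducible_add_of_aeval_X_one_eq_C_mul hF₂ (by omega) hc0 (hg ▸ hh ▸ hgc)
    (hf ▸ hirr)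

theorem stmt12 (K : Type*) [Field K] (n : ℕ) (hn : 2 ≤ n)
    (f : MvPolynomial (Fin 2) K)
    (hdeg : f.totalDegree = n)
    (hf : f = homogeneousComponent (n - 1) f + homogeneousComponent n f)
    (hfn : homogeneousComponent n f ≠ 0)
    (g h : Polynomial K)
    (hg : g = MvPolynomial.aeval
      (![Polynomial.X, 1] : Fin 2 → Polynomial K) (homogeneousComponent (n - 1) f))
    (hh : h = MvPolynomial.aeval
      (![Polynomial.X, 1] : Fin 2 → Polynomial K) (homogeneousComponent n f))
    (hh0 : h ≠ 0)
    (G H : RatFunc K)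
    (hG : G = algebraMap (Polynomial K) (RatFunc K) g)
    (hH : H = algebraMap (Polynomial K) (RatFunc K) h) :
    MvPolynomial.aeval
      (![-(RatFunc.X * G) / H, -G / H] : Fin 2 → RatFunc K) f = 0 ∧
    (IsAlgClosed K → Irreducible f →
      homogeneousComponent (n - 1) f ≠ 0 ∧ ¬∃ c : K, G / H = RatFunc.C c) :=
  stmt12_general K n hn f hf g h hg hh hh0 G H hG hH
end
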